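/- Fix y ∈ ℝ, ε > 0, m ∈ ℝ and ν > 0. Then ∫ 2·max(0, |y − η| − ε) φ(η; m, ν²) dη = 2[ (y − ε − m) Φ(y − ε; m, ν²) + ν² φ(y − ε; m, ν²) + (m − y − ε)(1 − Φ(y + ε; m, ν²)) + ν² φ(y + ε; m, ν²) ]. -/

import Mathlib

/-!
Since `ε ≥ 0`, the loss splits as `max 0 (y - ε - η) + max 0 (η - (y + ε))`, and each piece is
a one-sided partial expectation of the Gaussian:
`∫ max 0 (c - η) φ = ∫_{η ≤ c} ((c - m) - (η - m)) φ`. The `(c - m)` part is a value of `Φ`, and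
the `(η - m)` part integrates in closed form by Stein's identity `ν² φ' = -(η - m) φ`: `-ν² φ` is
an antiderivative of `(η - m) φ` vanishing at `±∞`.
-/

open MeasureTheory Real Filter

/-- Gaussian density with mean `m` and variance `ν ^ 2`, evaluated at `x`:
`φ(x; m, ν²) = (2πν²)^{-1/2} exp(−(x−m)²/(2ν²))`. -/
noncomputable def gpdf (m ν x : ℝ) : ℝ :=
  (Real.sqrt (2 * Real.pi * ν ^ 2))⁻¹ * Real.exp (-((x - m) ^ 2) / (2 * ν ^ 2))

/-- Gaussian cumulative distribution function with mean `m` and variance `ν ^ 2`: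
`Φ(c; m, ν²) = ∫_{−∞}^{c} φ(η; m, ν²) dη`. -/
noncomputable def gcdf (m ν c : ℝ) : ℝ := ∫ x in Set.Iio c, gpdf m ν x

open Set

lemma max_zero_abs_sub_sub_eq {ε : ℝ} (hε : 0 ≤ ε) (y x : ℝ) :
    max 0 (|y - x| - ε) = max 0 (y - ε - x) + max 0 (x - (y + ε)) := by
  rcases le_total x y with h | h
  · rw [abs_of_nonneg (sub_nonneg.2 h), max_eq_left (a := 0) (by linarith : x - (y + ε) ≤ 0)]
    ring_nf
  · rw [abs_of_nonpos (sub_nonpos.2 h), max_eq_left (a := 0) (by linarith : y - ε - x ≤ 0)]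
    ring_nf

lemma max_zero_const_sub_mul_eq_indicator (c : ℝ) (f : ℝ → ℝ) :
    (fun x => max 0 (c - x) * f x) = (Iic c).indicator (fun x => (c - x) * f x) := by
  ext x
  by_cases hx : x ≤ c
  · simp [hx]
  · simp [hx, (not_le.1 hx).le]

lemma max_zero_sub_const_mul_eq_indicator (c : ℝ) (f : ℝ → ℝ) :
    (fun x => max 0 (x - c) * f x) = (Ioi c).indicator (fun x => (x - c) * f x) := by
  ext x
  by_cases hx : c < x
  · simp [hx, hx.le]
  · simp [hx, not_lt.1 hx]

lemma gpdf_eq_gaussianPDFReal (m ν : ℝ) :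
    gpdf m ν = ProbabilityTheory.gaussianPDFReal m ⟨ν ^ 2, sq_nonneg ν⟩ := rfl

lemma integrable_gpdf (m ν : ℝ) : Integrable (gpdf m ν) := by
  rw [gpdf_eq_gaussianPDFReal]
  exact ProbabilityTheory.integrable_gaussianPDFReal _ _

lemma hasDerivAt_gpdf (m ν x : ℝ) :
    HasDerivAt (gpdf m ν) (-(x - m) / ν ^ 2 * gpdf m ν x) x := by
  have hexponent : HasDerivAt (fun t => -((t - m) ^ 2) / (2 * ν ^ 2)) (-(x - m) / ν ^ 2) x := by
    have hshift : HasDerivAt (fun t => t - m) 1 x := (hasDerivAt_id x).sub_const m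
    refine ((hshift.pow 2).neg.div_const (2 * ν ^ 2)).congr_deriv ?_
    ring
  exact (hexponent.exp.const_mul (√(2 * π * ν ^ 2))⁻¹).congr_deriv (by rw [gpdf]; ring)

section

variable (m : ℝ) {ν : ℝ}

lemma integral_gpdf (hν : ν ≠ 0) : ∫ x, gpdf m ν x = 1 := by
  rw [gpdf_eq_gaussianPDFReal]
  exact ProbabilityTheory.integral_gaussianPDFReal_eq_one m
    (fun h => pow_ne_zero 2 hν (congrArg NNReal.toReal h))

lemma integrable_sub_mul_gpdf (hν : ν ≠ 0) (c : ℝ) :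
    Integrable (fun x => (x - c) * gpdf m ν x) := by
  have hb : 0 < (2 * ν ^ 2)⁻¹ := by positivity
  have hcentred := integrable_mul_exp_neg_mul_sq hb
  have hshifted : Integrable (fun x => (x - m) * exp (-(2 * ν ^ 2)⁻¹ * (x - m) ^ 2)) :=
    ((measurePreserving_sub_right volume m).integrable_comp
      hcentred.aestronglyMeasurable).2 hcentred
  refine ((hshifted.const_mul (√(2 * π * ν ^ 2))⁻¹).add
    ((integrable_gpdf m ν).const_mul (m - c))).congr (Eventually.of_forall fun x => ?_)
  simp only [Pi.add_apply, gpdf, div_eq_inv_mul, neg_mul, mul_neg]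
  ring

lemma hasDerivAt_neg_sq_mul_gpdf (hν : ν ≠ 0) (x : ℝ) :
    HasDerivAt (fun t => -(ν ^ 2 * gpdf m ν t)) ((x - m) * gpdf m ν x) x :=
  ((hasDerivAt_gpdf m ν x).const_mul (ν ^ 2)).neg.congr_deriv (by field_simp)

lemma setIntegral_Iic_sub_mul_gpdf (hν : ν ≠ 0) (c : ℝ) :
    ∫ x in Iic c, (x - m) * gpdf m ν x = -(ν ^ 2 * gpdf m ν c) := by
  have hderiv := fun x (_ : x ∈ Iic c) => hasDerivAt_neg_sq_mul_gpdf m hν x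
  have hint : IntegrableOn _ (Iic c) := (integrable_sub_mul_gpdf m hν m).integrableOn
  have hlim := tendsto_zero_of_hasDerivAt_of_integrableOn_Iic hderiv hint
    ((integrable_gpdf m ν).const_mul _).neg.integrableOn
  rw [integral_Iic_of_hasDerivAt_of_tendsto' hderiv hint hlim, sub_zero]

lemma setIntegral_Ioi_sub_mul_gpdf (hν : ν ≠ 0) (c : ℝ) :
    ∫ x in Ioi c, (x - m) * gpdf m ν x = ν ^ 2 * gpdf m ν c := by
  have hderiv := fun x (_ : x ∈ Ici c) => hasDerivAt_neg_sq_mul_gpdf m hν x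
  have hint : IntegrableOn _ (Ioi c) := (integrable_sub_mul_gpdf m hν m).integrableOn
  have hlim := tendsto_zero_of_hasDerivAt_of_integrableOn_Ioi
    (fun x hx => hderiv x (Ioi_subset_Ici_self hx)) hint
    ((integrable_gpdf m ν).const_mul _).neg.integrableOn
  rw [integral_Ioi_of_hasDerivAt_of_tendsto' hderiv hint hlim, zero_sub, neg_neg]

lemma setIntegral_Ioi_gpdf (hν : ν ≠ 0) (c : ℝ) :
    ∫ x in Ioi c, gpdf m ν x = 1 - gcdf m ν c := by
  rw [gcdf, ← integral_Iic_eq_integral_Iio, ← integral_gpdf m hν,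
    ← intervalIntegral.integral_Iic_add_Ioi (integrable_gpdf m ν).integrableOn
      (integrable_gpdf m ν).integrableOn]
  ring

lemma integrable_max_zero_const_sub_mul_gpdf (hν : ν ≠ 0) (c : ℝ) :
    Integrable (fun x => max 0 (c - x) * gpdf m ν x) := by
  rw [max_zero_const_sub_mul_eq_indicator, integrable_indicator_iff measurableSet_Iic]
  refine (integrable_sub_mul_gpdf m hν c).neg.integrableOn.congr_fun (fun x _ => ?_)
    measurableSet_Iic
  simp only [Pi.neg_apply]
  ring

lemma integrable_max_zero_sub_const_mul_gpdf (hν : ν ≠ 0) (c : ℝ) :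
    Integrable (fun x => max 0 (x - c) * gpdf m ν x) := by
  rw [max_zero_sub_const_mul_eq_indicator, integrable_indicator_iff measurableSet_Ioi]
  exact (integrable_sub_mul_gpdf m hν c).integrableOn

lemma integral_max_zero_const_sub_mul_gpdf (hν : ν ≠ 0) (c : ℝ) :
    ∫ x, max 0 (c - x) * gpdf m ν x = (c - m) * gcdf m ν c + ν ^ 2 * gpdf m ν c := by
  have hsplit : (fun x => (c - x) * gpdf m ν x)
      = fun x => (c - m) * gpdf m ν x - (x - m) * gpdf m ν x := by
    ext x; ring
  rw [max_zero_const_sub_mul_eq_indicator, integral_indicator measurableSet_Iic, hsplit,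
    integral_sub ((integrable_gpdf m ν).const_mul _).integrableOn
      (integrable_sub_mul_gpdf m hν m).integrableOn,
    integral_const_mul, setIntegral_Iic_sub_mul_gpdf m hν, integral_Iic_eq_integral_Iio, gcdf]
  ring

lemma integral_max_zero_sub_const_mul_gpdf (hν : ν ≠ 0) (c : ℝ) :
    ∫ x, max 0 (x - c) * gpdf m ν x = (m - c) * (1 - gcdf m ν c) + ν ^ 2 * gpdf m ν c := by
  have hsplit : (fun x => (x - c) * gpdf m ν x)
      = fun x => (x - m) * gpdf m ν x + (m - c) * gpdf m ν x := by
    ext x; ring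
  rw [max_zero_sub_const_mul_eq_indicator, integral_indicator measurableSet_Ioi, hsplit,
    integral_add (integrable_sub_mul_gpdf m hν m).integrableOn
      ((integrable_gpdf m ν).const_mul _).integrableOn,
    integral_const_mul, setIntegral_Ioi_sub_mul_gpdf m hν, setIntegral_Ioi_gpdf m hν]
  ring

end

theorem svr_Psi0 (y ε m ν : ℝ) (hε : 0 < ε) (hν : 0 < ν) :
    ∫ η, 2 * max 0 (|y - η| - ε) * gpdf m ν η
      = 2 * ((y - ε - m) * gcdf m ν (y - ε) + ν ^ 2 * gpdf m ν (y - ε)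
          + (m - y - ε) * (1 - gcdf m ν (y + ε)) + ν ^ 2 * gpdf m ν (y + ε)) := by
  have hsplit : (fun η => 2 * max 0 (|y - η| - ε) * gpdf m ν η) = fun η =>
      2 * (max 0 (y - ε - η) * gpdf m ν η) + 2 * (max 0 (η - (y + ε)) * gpdf m ν η) := by
    ext η
    rw [max_zero_abs_sub_sub_eq hε.le]
    ring
  rw [hsplit, integral_add
      ((integrable_max_zero_const_sub_mul_gpdf m hν.ne' _).const_mul 2)
      ((integrable_max_zero_sub_const_mul_gpdf m hν.ne' _).const_mul 2),
    integral_const_mul, integral_const_mul, integral_max_zero_const_sub_mul_gpdf m hν.ne',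
    integral_max_zero_sub_const_mul_gpdf m hν.ne']
  ring
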